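/- In blocking Nim with parameter k, write each pile size as q_i·k + r_i with 0 ≤ r_i < k. A position together with a constraint set S ⊆ {1,2,...} of size k−1 is a previous-player win if and only if the XOR of the q_i is zero and {1, ..., max_i r_i} ⊆ S (where max over the empty set is 0). -/

import Mathlib

instance : Std.Commutative (α := ℕ) (· ^^^ ·) := ⟨Nat.xor_comm⟩
instance : Std.Associative (α := ℕ) (· ^^^ ·) := ⟨Nat.xor_assoc⟩

/-- The nim-sum (bitwise XOR) of a finite multiset. -/
def nimSum (s : Multiset ℕ) : ℕ := Multiset.fold (· ^^^ ·) 0 s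

/-- A game state of blocking Nim: a multiset of pile sizes together with the
current constraint set of forbidden removal amounts. -/
abbrev BState := Multiset ℕ × Finset ℕ

/-- A move in blocking Nim with parameter `k`: remove from one pile a positive
number of counters not in the current constraint set, then name a new
constraint set of `k - 1` positive integers. -/
def BMove (k : ℕ) (p q : BState) : Prop :=
  ∃ a ∈ p.1, ∃ b < a, (a - b) ∉ p.2 ∧ q.1 = b ::ₘ p.1.erase a ∧
    q.2.card = k - 1 ∧ 0 ∉ q.2

mutual
/-- Previous-player win in blocking Nim: every move leads to a next-player win. -/
inductive BP (k : ℕ) : BState → Prop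
  | mk (p : BState) : (∀ q, BMove k p q → BN k q) → BP k p

/-- Next-player win in blocking Nim: some move leads to a previous-player win. -/
inductive BN (k : ℕ) : BState → Prop
  | mk (p q : BState) : BMove k p q → BP k q → BN k p
end

/-!
A position is a P-position exactly when every move from it leads to a non-P-position and from
every non-P-position some move leads to a P-position; since the total number of counters
decreases, such a set of positions is unique. For the claimed set: if the quotient nim-sum is
zero, a move that keeps it zero leaves the quotient of the pile unchanged, so it removes at most
the pile's remainder, an amount forbidden by the constraint set. Conversely, if the quotient
nim-sum is nonzero, the usual Nim move lowers some quotient `a / k` to a value `Q`, and the `k`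
removals leaving `k * Q, …, k * Q + k - 1` counters cannot all be among the `k - 1` forbidden
ones; if only the remainder condition fails, remove a missing amount `j` from a pile with
remainder at least `j`. Either way, the mover then forbids `1, …, k - 1`.
-/

open Multiset

lemma nimSum_cons (a : ℕ) (m : Multiset ℕ) : nimSum (a ::ₘ m) = a ^^^ nimSum m :=
  fold_cons_left _ _ _ _

lemma nimSum_map_cons_erase (f : ℕ → ℕ) {a : ℕ} {m : Multiset ℕ} (b : ℕ) (ha : a ∈ m) :
    nimSum ((b ::ₘ m.erase a).map f) = f b ^^^ f a ^^^ nimSum (m.map f) := by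
  conv_rhs => rw [← cons_erase ha]
  rw [map_cons, map_cons, nimSum_cons, nimSum_cons, Nat.xor_assoc, Nat.xor_xor_cancel_left]

lemma exists_mem_xor_lt_of_lt_nimSum {c : ℕ} {m : Multiset ℕ} (h : c < nimSum m) :
    ∃ x ∈ m, x ^^^ (c ^^^ nimSum m) < x := by
  induction m using Multiset.induction generalizing c with
  | empty => simp [nimSum] at h
  | cons a m ih =>
    rw [nimSum_cons] at h ⊢
    rcases Nat.lt_xor_cases h with h | h
    · refine ⟨a, mem_cons_self a m, ?_⟩
      rwa [← Nat.xor_assoc c, Nat.xor_comm c a, Nat.xor_assoc, Nat.xor_xor_cancel_left]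
    · obtain ⟨x, hx, hlt⟩ := ih h
      exact ⟨x, mem_cons_of_mem hx, by rwa [Nat.xor_assoc] at hlt⟩

lemma exists_mem_xor_nimSum_lt {m : Multiset ℕ} (h : nimSum m ≠ 0) :
    ∃ x ∈ m, x ^^^ nimSum m < x := by
  simpa using exists_mem_xor_lt_of_lt_nimSum (Nat.pos_of_ne_zero h)

lemma exists_mem_le_of_le_sup {m : Multiset ℕ} {j : ℕ} (hj : 0 < j) (h : j ≤ m.sup) :
    ∃ x ∈ m, j ≤ x := by
  by_contra! hlt
  have := Multiset.sup_le.2 fun x hx => Nat.le_sub_one_of_lt (hlt x hx)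
  omega

lemma Nat.sub_le_mod_of_div_eq {a b k : ℕ} (h : b / k = a / k) : a - b ≤ a % k := by
  have := Nat.div_add_mod a k
  have := Nat.div_add_mod b k
  rw [h] at *
  omega

lemma Nat.sub_div_eq_of_le_mod {a j k : ℕ} (h : j ≤ a % k) : (a - j) / k = a / k := by
  rcases Nat.eq_zero_or_pos k with rfl | hk
  · simp
  have hmod := Nat.mod_lt a hk
  have hsplit : a - j = (a % k - j) + k * (a / k) := by
    have := Nat.div_add_mod a k
    omega
  rw [hsplit, Nat.add_mul_div_left _ _ hk, Nat.div_eq_of_lt (by omega), Nat.zero_add]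

lemma exists_sub_notMem_of_lt_div {k a Q : ℕ} {S : Finset ℕ} (hS : S.card < k)
    (hQ : Q < a / k) : ∃ b < a, a - b ∉ S ∧ b / k = Q := by
  have hQa : (Q + 1) * k ≤ a := (Nat.le_div_iff_mul_le (by omega)).1 hQ
  rw [Nat.add_mul, Nat.one_mul, Nat.mul_comm] at hQa
  obtain ⟨e, he, heS⟩ := Finset.exists_mem_notMem_of_card_lt_card (s := S)
    (t := Finset.Ioc (a - (k * Q + k)) (a - k * Q)) (by rw [Nat.card_Ioc]; omega)
  rw [Finset.mem_Ioc] at he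
  refine ⟨a - e, by omega, by rwa [Nat.sub_sub_self (by omega)], ?_⟩
  exact Nat.div_eq_of_lt_le (by rw [Nat.mul_comm]; omega)
    (by rw [Nat.add_mul, Nat.one_mul, Nat.mul_comm]; omega)

namespace BMove

variable {k : ℕ} {p q : BState}

lemma sum_lt (h : BMove k p q) : q.1.sum < p.1.sum := by
  obtain ⟨a, ha, b, hb, -, hq, -⟩ := h
  rw [hq, sum_cons, ← sum_erase ha]
  omega

lemma card_eq (h : BMove k p q) : q.2.card = k - 1 := by
  obtain ⟨-, -, -, -, -, -, hcard, -⟩ := h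
  exact hcard

theorem wellFounded (k : ℕ) : WellFounded (flip (BMove k)) :=
  Subrelation.wf (fun h => sum_lt h) (InvImage.wf (fun p : BState => p.1.sum) wellFounded_lt)

end BMove

section Determinacy

variable {k : ℕ}

lemma bP_iff {p : BState} : BP k p ↔ ∀ q, BMove k p q → BN k q :=
  ⟨fun ⟨_, h⟩ => h, BP.mk p⟩

lemma bN_iff {p : BState} : BN k p ↔ ∃ q, BMove k p q ∧ BP k q :=
  ⟨fun ⟨_, q, hm, hq⟩ => ⟨q, hm, hq⟩, fun ⟨q, hm, hq⟩ => BN.mk p q hm hq⟩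

lemma bN_iff_not_bP (p : BState) : BN k p ↔ ¬ BP k p := by
  induction p using (BMove.wellFounded k).induction with
  | _ p ih =>
  rw [bN_iff, bP_iff]
  push Not
  exact exists_congr fun q => and_congr_right fun hm => by rw [ih q hm, not_not]

lemma bP_iff_forall_not_bP {p : BState} : BP k p ↔ ∀ q, BMove k p q → ¬ BP k q := by
  rw [bP_iff]
  exact forall₂_congr fun q _ => bN_iff_not_bP q

theorem bP_iff_of_forall_bMove {C : BState → Prop}
    (hC : ∀ p : BState, p.2.card = k - 1 → (C p ↔ ∀ q, BMove k p q → ¬ C q))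
    {p : BState} (hp : p.2.card = k - 1) : BP k p ↔ C p := by
  induction p using (BMove.wellFounded k).induction with
  | _ p ih =>
  rw [bP_iff_forall_not_bP, hC p hp]
  exact forall₂_congr fun q hm => by rw [ih q hm hm.card_eq]

end Determinacy

section Criterion

variable {k : ℕ}

def BPCriterion (k : ℕ) (p : BState) : Prop :=
  nimSum (p.1.map (· / k)) = 0 ∧ ∀ j : ℕ, 0 < j → j ≤ (p.1.map (· % k)).sup → j ∈ p.2

lemma BPCriterion.not_of_bMove {p q : BState} (h : BPCriterion k p) (hm : BMove k p q) :
    ¬ BPCriterion k q := by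
  obtain ⟨a, ha, b, hb, hS, hq, -⟩ := hm
  rintro ⟨hq0, -⟩
  rw [hq, nimSum_map_cons_erase _ _ ha, h.1, Nat.xor_zero, Nat.xor_eq_zero_iff] at hq0
  refine hS (h.2 _ (by omega) ?_)
  exact (Nat.sub_le_mod_of_div_eq hq0).trans (le_sup (mem_map_of_mem _ ha))

lemma bMove_Icc {s : Multiset ℕ} {S : Finset ℕ} {a b : ℕ} (ha : a ∈ s) (hb : b < a)
    (hS : a - b ∉ S) : BMove k (s, S) (b ::ₘ s.erase a, Finset.Icc 1 (k - 1)) :=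
  ⟨a, ha, b, hb, hS, rfl, by simp, by simp⟩

lemma bPCriterion_Icc (hk : 0 < k) {m : Multiset ℕ} (h : nimSum (m.map (· / k)) = 0) :
    BPCriterion k (m, Finset.Icc 1 (k - 1)) := by
  refine ⟨h, fun j hj hjm => Finset.mem_Icc.2 ⟨hj, hjm.trans (Multiset.sup_le.2 ?_)⟩⟩
  simp only [mem_map]
  rintro _ ⟨a, -, rfl⟩
  have := Nat.mod_lt a hk
  omega

lemma exists_bMove_bPCriterion {s : Multiset ℕ} {S : Finset ℕ} (hS : S.card < k)
    (h : ¬ BPCriterion k (s, S)) : ∃ q, BMove k (s, S) q ∧ BPCriterion k q := by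
  generalize hXdef : nimSum (s.map (· / k)) = X
  suffices ∃ a ∈ s, ∃ b < a, a - b ∉ S ∧ b / k = a / k ^^^ X by
    obtain ⟨a, ha, b, hb, hab, hbk⟩ := this
    refine ⟨_, bMove_Icc ha hb hab, bPCriterion_Icc (by omega) ?_⟩
    rw [nimSum_map_cons_erase _ _ ha, hbk, hXdef, Nat.xor_comm (a / k), Nat.xor_assoc X,
      Nat.xor_self, Nat.xor_zero, Nat.xor_self]
  by_cases hX : X = 0
  · obtain ⟨j, hj, hjm, hjS⟩ : ∃ j, 0 < j ∧ j ≤ (s.map (· % k)).sup ∧ j ∉ S := by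
      by_contra! hall
      exact h ⟨hXdef.trans hX, hall⟩
    obtain ⟨_, hx, hja⟩ := exists_mem_le_of_le_sup hj hjm
    obtain ⟨a, ha, rfl⟩ := mem_map.1 hx
    have := Nat.mod_le a k
    refine ⟨a, ha, a - j, by omega, by rwa [Nat.sub_sub_self (by omega)], ?_⟩
    rw [hX, Nat.xor_zero, Nat.sub_div_eq_of_le_mod hja]
  · obtain ⟨_, hx, hlt⟩ := exists_mem_xor_nimSum_lt (hXdef ▸ hX)
    obtain ⟨a, ha, rfl⟩ := mem_map.1 hx
    obtain ⟨b, hb, hab, hbk⟩ := exists_sub_notMem_of_lt_div hS (hXdef ▸ hlt)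
    exact ⟨a, ha, b, hb, hab, hbk⟩

lemma bPCriterion_iff_forall_bMove (hk : 0 < k) {p : BState} (hp : p.2.card = k - 1) :
    BPCriterion k p ↔ ∀ q, BMove k p q → ¬ BPCriterion k q := by
  refine ⟨fun h _ => h.not_of_bMove, fun h => by_contra fun hn => ?_⟩
  obtain ⟨q, hm, hq⟩ := exists_bMove_bPCriterion (by omega) hn
  exact h q hm hq

end Criterion

/-- Solution of blocking Nim: writing each pile size as `qᵢ·k + rᵢ` with
`0 ≤ rᵢ < k`, a position with constraint set `S` (of `k - 1` positive
integers) is a previous-player win iff the XOR of the quotients `qᵢ` is zero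
and every number from `1` up to the maximum remainder belongs to `S`. -/
theorem stmt9 (k : ℕ) (hk : 1 ≤ k) (s : Multiset ℕ) (S : Finset ℕ)
    (hcard : S.card = k - 1) (hpos : ∀ j ∈ S, 0 < j) :
    BP k (s, S) ↔
      nimSum (s.map (· / k)) = 0 ∧
      ∀ j : ℕ, 0 < j → j ≤ (s.map (· % k)).sup → j ∈ S :=
  bP_iff_of_forall_bMove (fun _ hp => bPCriterion_iff_forall_bMove hk hp) hcard
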